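/- For any Had_k-to-2Lin(2) gadget G̃ with completeness c(G̃) = 1 − 2^{−k}, the relaxed soundness satisfies (1 − rs(G̃))/(1 − c(G̃)) ≤ 2, i.e., 1 − rs(G̃) ≤ 2^{1−k}. -/

import Mathlib

open Finset
open scoped Classical

noncomputable section

/-- Boolean functions `𝔽₂^k → {1,−1}`, encoded with `true ↦ −1` and `false ↦ 1`. -/
abbrev BF (k : ℕ) := (Fin k → ZMod 2) → Bool

/-- The negation `−f` of a Boolean function. -/
def negB {k : ℕ} (f : BF k) : BF k := fun x => !(f x)

/-- The linear character `χ_α` as a Boolean function: `χ_α(x) = −1` iff `⟨α,x⟩ = 1`. -/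
def chiB {k : ℕ} (α : Fin k → ZMod 2) : BF k := fun x => decide (dotProduct α x = 1)

/-- `x_f` is a primary variable iff `f = ±χ_α` for some `α ≠ 0`. -/
def Primary {k : ℕ} (f : BF k) : Prop :=
  ∃ α : Fin k → ZMod 2, α ≠ 0 ∧ (f = chiB α ∨ f = negB (chiB α))

/-- The constant function `1`. -/
def oneB (k : ℕ) : BF k := fun _ => false

/-- The constant function `−1`. -/
def negOneB (k : ℕ) : BF k := fun _ => true

/-- `val(A,G) = Σ_{pairs} G(f₁,f₂)[A(x_{f₁}) = A(x_{f₂})]` (each unordered pair counted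
once via the symmetric sum). -/
def valA {k : ℕ} (G : BF k → BF k → ℝ) (A : BF k → ZMod 2) : ℝ :=
  (1 / 2 : ℝ) * ∑ f₁, ∑ f₂, G f₁ f₂ * (if A f₁ = A f₂ then 1 else 0)

/-- Assignments folded on the primary variables. -/
def sFoldSet (k : ℕ) : Finset (BF k → ZMod 2) :=
  univ.filter fun P => ∀ f, Primary f → P (negB f) = 1 + P f

/-- The (true) soundness `s(G)`: the expectation, over uniformly random folded assignments
`P` of the primary variables, of the maximum of `val(A,G)` over folded extensions `A`
of `P`. -/
def soundness {k : ℕ} (G : BF k → BF k → ℝ) : ℝ :=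
  ((sFoldSet k).card : ℝ)⁻¹ * ∑ P ∈ sFoldSet k,
    sSup {v : ℝ | ∃ A : BF k → ZMod 2, (∀ f, A (negB f) = 1 + A f) ∧
      (∀ f, Primary f → A f = P f) ∧ v = valA G A}

/-- Assignments folded on the primary variables and on the constants `x_1, x_{−1}`. -/
def rsFoldSet (k : ℕ) : Finset (BF k → ZMod 2) :=
  univ.filter fun P => ∀ f, (Primary f ∨ f = oneB k ∨ f = negOneB k) →
    P (negB f) = 1 + P f

/-- Wiman's relaxed soundness `rs(G)`: as `s(G)`, but the assignments `P` are folded on the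
primary variables and the constants, and the extension `A` must agree with `P` there but is
not required to be folded on the auxiliary variables. -/
def rsoundness {k : ℕ} (G : BF k → BF k → ℝ) : ℝ :=
  ((rsFoldSet k).card : ℝ)⁻¹ * ∑ P ∈ rsFoldSet k,
    sSup {v : ℝ | ∃ A : BF k → ZMod 2,
      (∀ f, (Primary f ∨ f = oneB k ∨ f = negOneB k) → A f = P f) ∧ v = valA G A}

/-- The normalized Hamming distance between Boolean functions. -/
def ndistB {k : ℕ} (f₁ f₂ : BF k) : ℝ :=
  (2 ^ k : ℝ)⁻¹ * ∑ x, if f₁ x = f₂ x then (0 : ℝ) else 1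

/-- The completeness `c(G) = 1 − Σ G(f₁,f₂) dist(f₁,f₂)`. -/
def completeness {k : ℕ} (G : BF k → BF k → ℝ) : ℝ :=
  1 - (1 / 2 : ℝ) * ∑ f₁, ∑ f₂, G f₁ f₂ * ndistB f₁ f₂

/-! The variables `x_{±χ_α}` on which the assignment is prescribed are affine functions, and
distinct affine functions are at Hamming distance at least `2^{k-1}`. Given the prescribed values
`P`, label every `f` by thresholding its Hamming distance `D f` to the prescribed variables with
value `0`. For each threshold `t < 2^{k-1}` the labelling `[D f > t]` extends `P`, and since `D` is
`1`-Lipschitz an edge `{f₁, f₂}` is cut by at most `dist(f₁, f₂)` of these thresholds. Averaging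
over `t`, some threshold cuts at most `2^{1-k}` times the `G`-weighted total Hamming length of the
edges, which is `1` at completeness `1 - 2^{-k}`: this is the max-flow bound on source-sink paths
of length `2^{k-1}` in discrete form. -/

theorem card_mul_card_filter_dotProduct_eq {F ι : Type*} [Field F] [Fintype F] [DecidableEq F]
    [Fintype ι] [DecidableEq ι] {γ : ι → F} (hγ : γ ≠ 0) (c : F) :
    Fintype.card F * #{x : ι → F | γ ⬝ᵥ x = c} = Fintype.card F ^ Fintype.card ι := by
  let L : (ι → F) →+ F := AddMonoidHom.mk' (dotProduct γ) (dotProduct_add γ)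
  have hL : Function.Surjective L := by
    obtain ⟨i, hi⟩ := Function.ne_iff.mp hγ
    exact fun c' => ⟨Pi.single i (c' / γ i), by simp [L, dotProduct_single, mul_div_cancel₀ _ hi]⟩
  calc Fintype.card F * #{x : ι → F | γ ⬝ᵥ x = c}
      = ∑ c' : F, #{x | L x = c'} := by
        rw [sum_congr rfl fun c' _ => AddMonoidHom.card_fiber_eq_of_mem_range L (hL c') (hL c)]
        simp [L]
    _ = Fintype.card (ι → F) := (card_eq_sum_card_fiberwise (by simp)).symm
    _ = _ := by simp

section Cut

variable {V : Type*} [Fintype V]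

/-- Like `valA`, this counts each unordered pair `{u, v}` twice. -/
def cutWeight {γ : Type*} [DecidableEq γ] (w : V → V → ℝ) (A : V → γ) : ℝ :=
  ∑ u, ∑ v, if A u = A v then 0 else w u v

theorem card_filter_range_separating_le (a b M : ℕ) :
    #{t ∈ range M | ¬(a ≤ t ↔ b ≤ t)} ≤ Nat.dist a b := by
  calc #{t ∈ range M | ¬(a ≤ t ↔ b ≤ t)} ≤ #(Ico (min a b) (max a b)) := by
        refine card_le_card fun t ht => ?_
        simp only [mem_filter, mem_range, mem_Ico] at ht ⊢
        omega
    _ = Nat.dist a b := by rw [Nat.card_Ico, Nat.dist_eq_max_sub_min]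

theorem exists_threshold_mul_cutWeight_le (w : V → V → ℝ) (hw : ∀ u v, 0 ≤ w u v) (D : V → ℕ)
    (d : V → V → ℕ) (hD : ∀ u v, Nat.dist (D u) (D v) ≤ d u v) {M : ℕ} (hM : 0 < M) :
    ∃ t < M, M * cutWeight w (fun v => if D v ≤ t then (0 : ZMod 2) else 1) ≤
      ∑ u, ∑ v, w u v * d u v := by
  have hsep : ∀ t u v, ((if D u ≤ t then (0 : ZMod 2) else 1) = if D v ≤ t then 0 else 1) ↔
      (D u ≤ t ↔ D v ≤ t) := by
    intro t u v
    by_cases hu : D u ≤ t <;> by_cases hv : D v ≤ t <;> simp [hu, hv]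
  have hsum : ∑ t ∈ range M, cutWeight w (fun v => if D v ≤ t then (0 : ZMod 2) else 1) ≤
      ∑ u, ∑ v, w u v * d u v := by
    simp only [cutWeight, hsep]
    rw [sum_comm]
    refine sum_le_sum fun u _ => ?_
    rw [sum_comm]
    refine sum_le_sum fun v _ => ?_
    calc ∑ t ∈ range M, (if (D u ≤ t ↔ D v ≤ t) then 0 else w u v)
        = w u v * #{t ∈ range M | ¬(D u ≤ t ↔ D v ≤ t)} := by
          rw [sum_ite, sum_const_zero, zero_add, sum_const, nsmul_eq_mul, mul_comm]
      _ ≤ w u v * d u v := by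
          gcongr
          · exact hw u v
          · exact (card_filter_range_separating_le _ _ _).trans (hD u v)
  obtain ⟨t, ht, hle⟩ := exists_le_of_sum_le (s := range M) (nonempty_range_iff.mpr hM.ne')
    (f := fun t => M * cutWeight w (fun v => if D v ≤ t then (0 : ZMod 2) else 1))
    (g := fun _ => ∑ u, ∑ v, w u v * d u v) (by
      rw [← mul_sum, sum_const, card_range, nsmul_eq_mul]
      gcongr)
  exact ⟨t, mem_range.mp ht, hle⟩

end Cut

section Hamming

variable {ι β : Type*} [Fintype ι] [DecidableEq β]

theorem inf'_hammingDist_le_add {S : Finset (ι → β)} (hS : S.Nonempty) (f g : ι → β) :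
    S.inf' hS (hammingDist f) ≤ S.inf' hS (hammingDist g) + hammingDist f g := by
  obtain ⟨s, hs, hgs⟩ := exists_mem_eq_inf' hS (hammingDist g)
  calc S.inf' hS (hammingDist f) ≤ hammingDist f s := inf'_le _ hs
    _ ≤ hammingDist f g + hammingDist g s := hammingDist_triangle f g s
    _ = _ := by rw [hgs, add_comm]

theorem dist_inf'_hammingDist_le {S : Finset (ι → β)} (hS : S.Nonempty) (f g : ι → β) :
    Nat.dist (S.inf' hS (hammingDist f)) (S.inf' hS (hammingDist g)) ≤ hammingDist f g := by
  have h₁ := inf'_hammingDist_le_add hS f g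
  have h₂ := inf'_hammingDist_le_add hS g f
  rw [hammingDist_comm g f] at h₂
  unfold Nat.dist
  omega

theorem exists_eqOn_mul_cutWeight_le [DecidableEq ι] [Fintype β] (w : (ι → β) → (ι → β) → ℝ)
    (hw : ∀ f g, 0 ≤ w f g) (T : Set (ι → β)) (P : (ι → β) → ZMod 2) {M : ℕ} (hM : 0 < M)
    (hT : ∀ f ∈ T, ∀ g ∈ T, P f ≠ P g → M ≤ hammingDist f g) :
    ∃ A : (ι → β) → ZMod 2, Set.EqOn A P T ∧
      M * cutWeight w A ≤ ∑ f, ∑ g, w f g * hammingDist f g := by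
  have hP : ∀ f, P f ≠ 0 → P f = 1 := fun f => (by decide : ∀ a : ZMod 2, a ≠ 0 → a = 1) _
  set S : Finset (ι → β) := {g | g ∈ T ∧ P g = 0}
  rcases S.eq_empty_or_nonempty with hS | hS
  · refine ⟨fun _ => 1, fun f hf => (hP f fun h0 => ?_).symm, ?_⟩
    · exact (eq_empty_iff_forall_notMem.mp hS) f (by simp [S, hf, h0])
    · simp only [cutWeight, if_true, sum_const_zero, mul_zero]
      exact sum_nonneg fun f _ => sum_nonneg fun g _ => mul_nonneg (hw f g) (Nat.cast_nonneg _)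
  let D f := S.inf' hS (hammingDist f)
  obtain ⟨t, ht, hcut⟩ := exists_threshold_mul_cutWeight_le w hw D hammingDist
    (dist_inf'_hammingDist_le hS) hM
  refine ⟨_, fun f hf => ?_, hcut⟩
  by_cases hf0 : P f = 0
  · have : D f = 0 := Nat.le_zero.mp <| (inf'_le _ (by simp [S, hf, hf0])).trans_eq
      (hammingDist_self f)
    simp [D, this, hf0]
  · have : M ≤ D f := le_inf' _ _ fun g hg => by
      simp only [S, mem_filter, mem_univ, true_and] at hg
      exact hT f hf g hg.1 (by rw [hg.2]; exact hf0)
    simp [D, show ¬D f ≤ t by omega, hP f hf0]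

end Hamming

/-- The affine Boolean function `x ↦ (−1)^{α·x + c}`. -/
def affB {k : ℕ} (α : Fin k → ZMod 2) (c : ZMod 2) : BF k := fun x => decide (α ⬝ᵥ x + c = 1)

theorem hammingDist_affB {k : ℕ} (α β : Fin k → ZMod 2) (a b : ZMod 2) :
    hammingDist (affB α a) (affB β b) = #{x | (α + β) ⬝ᵥ x = a + b + 1} := by
  have key : ∀ u v a b : ZMod 2,
      (decide (u + a = 1) ≠ decide (v + b = 1)) ↔ u + v = a + b + 1 := by decide
  simp only [hammingDist, affB, add_dotProduct, key]

theorem two_pow_le_two_mul_hammingDist_affB {k : ℕ} {α β : Fin k → ZMod 2} {a b : ZMod 2}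
    (h : affB α a ≠ affB β b) : 2 ^ k ≤ 2 * hammingDist (affB α a) (affB β b) := by
  rw [hammingDist_affB]
  by_cases hαβ : α = β
  · subst hαβ
    have hab : a + b + 1 = 0 :=
      (by decide : ∀ a b : ZMod 2, a ≠ b → a + b + 1 = 0) a b fun hab => h (hab ▸ rfl)
    simp [CharTwo.add_self_eq_zero, hab]
  · have hγ : α + β ≠ 0 := fun h0 => hαβ (funext fun i => CharTwo.add_eq_zero.mp (congrFun h0 i))
    have := card_mul_card_filter_dotProduct_eq hγ (a + b + 1)
    simp only [ZMod.card, Fintype.card_fin] at this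
    omega

theorem exists_eq_affB {k : ℕ} {f : BF k} (hf : Primary f ∨ f = oneB k ∨ f = negOneB k) :
    ∃ α c, f = affB α c := by
  have hneg : ∀ u : ZMod 2, (!decide (u = 1)) = decide (u + 1 = 1) := by decide
  rcases hf with ⟨α, -, rfl | rfl⟩ | rfl | rfl
  · exact ⟨α, 0, by funext x; simp [chiB, affB]⟩
  · exact ⟨α, 1, by funext x; simp only [negB, chiB, affB, hneg]⟩
  · exact ⟨0, 0, by funext x; simp [oneB, affB]⟩
  · exact ⟨0, 1, by funext x; simp [negOneB, affB]⟩

theorem two_pow_le_two_mul_hammingDist {k : ℕ} {f g : BF k}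
    (hf : Primary f ∨ f = oneB k ∨ f = negOneB k) (hg : Primary g ∨ g = oneB k ∨ g = negOneB k)
    (hfg : f ≠ g) : 2 ^ k ≤ 2 * hammingDist f g := by
  obtain ⟨α, a, rfl⟩ := exists_eq_affB hf
  obtain ⟨β, b, rfl⟩ := exists_eq_affB hg
  exact two_pow_le_two_mul_hammingDist_affB hfg

theorem valA_eq_sub_cutWeight {k : ℕ} (G : BF k → BF k → ℝ) (A : BF k → ZMod 2) :
    valA G A = 1 / 2 * ∑ f₁, ∑ f₂, G f₁ f₂ - 1 / 2 * cutWeight G A := by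
  simp only [valA, cutWeight, ← mul_sub, ← sum_sub_distrib]
  congr 1
  refine sum_congr rfl fun f₁ _ => sum_congr rfl fun f₂ _ => ?_
  split_ifs <;> ring

theorem ndistB_eq {k : ℕ} (f₁ f₂ : BF k) : ndistB f₁ f₂ = (2 ^ k : ℝ)⁻¹ * hammingDist f₁ f₂ := by
  simp [ndistB, hammingDist, sum_ite]

theorem half_sum_mul_hammingDist_eq {k : ℕ} (G : BF k → BF k → ℝ) :
    1 / 2 * ∑ f₁, ∑ f₂, G f₁ f₂ * hammingDist f₁ f₂ = 2 ^ k * (1 - completeness G) := by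
  simp only [completeness, ndistB_eq, mul_left_comm (G _ _), ← mul_sum]
  field_simp
  ring

theorem rsFoldSet_nonempty (k : ℕ) : (rsFoldSet k).Nonempty :=
  ⟨fun f => if f 0 then 1 else 0, by
    simp only [rsFoldSet, mem_filter, mem_univ, true_and, negB]
    intro f _
    rcases Bool.eq_false_or_eq_true (f 0) with h | h <;>
      simp [h, show (1 + 1 : ZMod 2) = 0 from rfl]⟩

theorem le_rsoundness {k : ℕ} (G : BF k → BF k → ℝ) {b : ℝ}
    (h : ∀ P : BF k → ZMod 2, ∃ A : BF k → ZMod 2,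
      (∀ f, (Primary f ∨ f = oneB k ∨ f = negOneB k) → A f = P f) ∧ b ≤ valA G A) :
    b ≤ rsoundness G := by
  have hcard : (0 : ℝ) < #(rsFoldSet k) := by exact_mod_cast (rsFoldSet_nonempty k).card_pos
  rw [rsoundness, le_inv_mul_iff₀ hcard, ← nsmul_eq_mul]
  refine card_nsmul_le_sum _ _ _ fun P _ => ?_
  obtain ⟨A, hA, hb⟩ := h P
  refine le_csSup_of_le ((Set.finite_range (valA G)).bddAbove.mono ?_) ⟨A, hA, rfl⟩ hb
  rintro v ⟨A', -, rfl⟩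
  exact ⟨A', rfl⟩

theorem exists_extension_one_sub_le_valA {k : ℕ} (hk : 1 ≤ k) (G : BF k → BF k → ℝ)
    (hG0 : ∀ f₁ f₂, 0 ≤ G f₁ f₂) (hGtot : (1 / 2 : ℝ) * ∑ f₁, ∑ f₂, G f₁ f₂ = 1)
    (hflow : 1 / 2 * ∑ f₁, ∑ f₂, G f₁ f₂ * hammingDist f₁ f₂ = 1) (P : BF k → ZMod 2) :
    ∃ A : BF k → ZMod 2, (∀ f, (Primary f ∨ f = oneB k ∨ f = negOneB k) → A f = P f) ∧
      1 - 2 * (2 ^ k : ℝ)⁻¹ ≤ valA G A := by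
  have hM : 2 ^ k = 2 * 2 ^ (k - 1) := by rw [← pow_succ']; congr; omega
  obtain ⟨A, hA, hcut⟩ := exists_eqOn_mul_cutWeight_le G hG0
    {f | Primary f ∨ f = oneB k ∨ f = negOneB k} P (M := 2 ^ (k - 1)) (by positivity)
    fun f hf g hg hfg => by
      have := two_pow_le_two_mul_hammingDist hf hg fun h => hfg (h ▸ rfl)
      omega
  refine ⟨A, fun f hf => hA hf, ?_⟩
  have hcut' : cutWeight G A ≤ 2 / 2 ^ (k - 1) := by
    rw [le_div_iff₀' (by positivity)]
    push_cast at hcut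
    linarith
  have h2k : 2 * (2 ^ k : ℝ)⁻¹ = 1 / 2 * (2 / 2 ^ (k - 1)) := by
    rw [show (2 ^ k : ℝ) = 2 * 2 ^ (k - 1) by exact_mod_cast hM]
    field_simp
  rw [valA_eq_sub_cutWeight, hGtot, h2k]
  linarith

theorem rsoundness_ratio_le_two_general {k : ℕ} (hk : 2 ≤ k) (G : BF k → BF k → ℝ)
    (hG0 : ∀ f₁ f₂, 0 ≤ G f₁ f₂)
    (hGtot : (1 / 2 : ℝ) * ∑ f₁, ∑ f₂, G f₁ f₂ = 1)
    (hc : completeness G = 1 - (2 ^ k : ℝ)⁻¹) :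
    1 - rsoundness G ≤ 2 * (2 ^ k : ℝ)⁻¹ := by
  have hflow : 1 / 2 * ∑ f₁, ∑ f₂, G f₁ f₂ * hammingDist f₁ f₂ = 1 := by
    rw [half_sum_mul_hammingDist_eq, hc, sub_sub_cancel, mul_inv_cancel₀ (by positivity)]
  have := le_rsoundness G
    (exists_extension_one_sub_le_valA (by omega) G hG0 hGtot hflow)
  linarith

/-- For any `Had_k`-to-`2Lin(2)` gadget `G̃` with completeness `1 − 2^{−k}`, the relaxed
soundness satisfies `(1 − rs(G̃))/(1 − c(G̃)) ≤ 2`, i.e. `1 − rs(G̃) ≤ 2^{1−k}`. -/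
theorem rsoundness_ratio_le_two {k : ℕ} (hk : 2 ≤ k) (G : BF k → BF k → ℝ)
    (hGsymm : ∀ f₁ f₂, G f₁ f₂ = G f₂ f₁) (hG0 : ∀ f₁ f₂, 0 ≤ G f₁ f₂)
    (hGdiag : ∀ f, G f f = 0) (hGneg : ∀ f, G f (negB f) = 0)
    (hGtot : (1 / 2 : ℝ) * ∑ f₁, ∑ f₂, G f₁ f₂ = 1)
    (hc : completeness G = 1 - (2 ^ k : ℝ)⁻¹) :
    1 - rsoundness G ≤ 2 * (2 ^ k : ℝ)⁻¹ :=
  rsoundness_ratio_le_two_general hk G hG0 hGtot hc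

end
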